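/- Let k ≥ 1, let N = k², and let M be an N×N matrix over the field 𝔽₂ with all diagonal entries equal to 1. Then the row space of M contains a vector with at least k nonzero entries. -/

import Mathlib

/-!
Let `S` be the row space and `v ∈ S` a vector of maximal Hamming weight `w`. No nonzero vector of
`S` vanishes on the support of `v` (adding it to `v` would increase the weight), so restriction to
that support embeds `S` into `𝔽₂^w`, giving `dim S ≤ w`. On the other hand every coordinate is
nonzero on some row (the diagonal), hence on some vector of a basis of `S`; the supports of the
`dim S` basis vectors, each of size at most `w`, therefore cover all `k²` coordinates. Thus
`k² ≤ dim S * w ≤ w²`.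
-/

open Finset Module

theorem hammingNorm_add_of_forall_eq_zero_or {ι β : Type*} [Fintype ι] [AddZeroClass β]
    [DecidableEq β] {v w : ι → β} (h : ∀ j, v j = 0 ∨ w j = 0) :
    hammingNorm (v + w) = hammingNorm v + hammingNorm w := by
  classical
  unfold hammingNorm
  rw [← card_union_of_disjoint]
  · congr 1
    ext j
    rcases h j with h | h <;> simp [h]
  · rw [disjoint_filter]
    intro j _ hv hw
    rcases h j with h | h <;> contradiction

theorem exists_mem_forall_hammingNorm_le {ι β : Type*} [Fintype ι] [Zero β] [DecidableEq β]
    {s : Set (ι → β)} (hs : s.Nonempty) : ∃ v ∈ s, ∀ x ∈ s, hammingNorm x ≤ hammingNorm v := by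
  have hbdd : BddAbove (hammingNorm '' s) :=
    ⟨Fintype.card ι, by rintro _ ⟨x, -, rfl⟩; exact hammingNorm_le_card_fintype⟩
  obtain ⟨v, hv, hvmax⟩ := Nat.sSup_mem (hs.image hammingNorm) hbdd
  exact ⟨v, hv, fun x hx => hvmax ▸ le_csSup hbdd ⟨x, hx, rfl⟩⟩

namespace Submodule

variable {K ι : Type*} [Field K] [DecidableEq K] [Fintype ι] {S : Submodule K (ι → K)}

theorem finrank_le_hammingNorm_of_forall_le {v : ι → K} (hv : v ∈ S)
    (hmax : ∀ x ∈ S, hammingNorm x ≤ hammingNorm v) : finrank K S ≤ hammingNorm v := by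
  let J : Finset ι := {j | v j ≠ 0}
  let restrict : S →ₗ[K] (J → K) := LinearMap.funLeft K K Subtype.val ∘ₗ S.subtype
  suffices Function.Injective restrict by
    have h := LinearMap.finrank_le_finrank_of_injective this
    rwa [finrank_fintype_fun_eq_card, Fintype.card_coe] at h
  rw [← LinearMap.ker_eq_bot, eq_bot_iff]
  rintro ⟨w, hw⟩ hker
  have hdisj : ∀ j, v j = 0 ∨ w j = 0 := by
    intro j
    by_cases hj : v j = 0
    · exact Or.inl hj
    · exact Or.inr (congr_fun (LinearMap.mem_ker.1 hker) ⟨j, by simpa [J] using hj⟩)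
  have hle := hmax (v + w) (S.add_mem hv hw)
  rw [hammingNorm_add_of_forall_eq_zero_or hdisj] at hle
  have hw0 : w = 0 := hammingNorm_eq_zero.1 (by omega)
  simp [hw0]

theorem card_le_finrank_mul_of_forall_hammingNorm_le {w : ℕ} (hcover : ∀ j, ∃ x ∈ S, x j ≠ 0)
    (hw : ∀ x ∈ S, hammingNorm x ≤ w) : Fintype.card ι ≤ finrank K S * w := by
  classical
  let b := finBasis K S
  have hsupp : ∀ j, ∃ i, (b i : ι → K) j ≠ 0 := by
    intro j
    by_contra! h
    obtain ⟨x, hx, hxj⟩ := hcover j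
    have hproj : LinearMap.proj j ∘ₗ S.subtype = 0 := b.ext fun i => h i
    exact hxj (LinearMap.congr_fun hproj ⟨x, hx⟩)
  calc Fintype.card ι = #(univ : Finset ι) := card_univ.symm
    _ ≤ #(univ.biUnion fun i => {j | (b i : ι → K) j ≠ 0}) := card_le_card fun j _ => by
        obtain ⟨i, hi⟩ := hsupp j
        exact mem_biUnion.2 ⟨i, mem_univ i, mem_filter.2 ⟨mem_univ j, hi⟩⟩
    _ ≤ ∑ i, hammingNorm (b i : ι → K) := card_biUnion_le
    _ ≤ ∑ _i : Fin (finrank K S), w := sum_le_sum fun i _ => hw _ (b i).2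
    _ = finrank K S * w := by simp

end Submodule

theorem rowspace_heavy_vector_general (k : ℕ)
    (M : Matrix (Fin (k ^ 2)) (Fin (k ^ 2)) (ZMod 2))
    (hdiag : ∀ i, M i i = 1) :
    ∃ v ∈ Submodule.span (ZMod 2) (Set.range fun i => M i),
      k ≤ (Finset.univ.filter (fun j => v j ≠ 0)).card := by
  set S := Submodule.span (ZMod 2) (Set.range fun i => M i)
  obtain ⟨v, hv, hmax⟩ := exists_mem_forall_hammingNorm_le (s := (S : Set (Fin (k ^ 2) → ZMod 2))) ⟨0, S.zero_mem⟩
  have hcover : ∀ j, ∃ x ∈ S, x j ≠ 0 :=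
    fun j => ⟨M j, Submodule.subset_span ⟨j, rfl⟩, by simp [hdiag]⟩
  have hrank := Submodule.finrank_le_hammingNorm_of_forall_le hv hmax
  have hcard := Submodule.card_le_finrank_mul_of_forall_hammingNorm_le hcover hmax
  have hsq : k ^ 2 ≤ hammingNorm v ^ 2 := by
    simpa [sq] using hcard.trans (Nat.mul_le_mul_right _ hrank)
  exact ⟨v, hv, (Nat.pow_le_pow_iff_left two_ne_zero).1 hsq⟩

/-- Let `k ≥ 1`, `N = k²`, and let `M` be an `N × N` matrix over `𝔽₂` with all
diagonal entries equal to 1.  Then the row space of `M` contains a vector with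
at least `k` nonzero entries. -/
theorem rowspace_heavy_vector (k : ℕ) (hk : 1 ≤ k)
    (M : Matrix (Fin (k ^ 2)) (Fin (k ^ 2)) (ZMod 2))
    (hdiag : ∀ i, M i i = 1) :
    ∃ v ∈ Submodule.span (ZMod 2) (Set.range fun i => M i),
      k ≤ (Finset.univ.filter (fun j => v j ≠ 0)).card :=
  rowspace_heavy_vector_general k M hdiag
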